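/- arXiv:2310.18599 — 6 statements merged into one kernel-verified Lean document; each statement's English description precedes it below -/
import Mathlib

section
/- Let h be a nondegenerate metric field on U and let Γ and Γ* be smooth Christoffel maps on U that are mutually dual with respect to h. If Γ and Γ* are both torsion-free, then the cubic field ∇h (formed with Γ) is totally symmetric and the averaged Christoffel map Γ⁰ := (1/2)(Γ + Γ*) is a Levi-Civita connection of h (torsion-free and metric-compatible). (Paper's Proposition 2.1, case (i)+(ii) ⇒ (iii)+(iv), in coordinates.) -/
/-! Differentiating the symmetry of `h` shows that `∂_v h (w, u)` is symmetric in
`w, u`. Writing the duality relation for `(w, u)` and for `(u, w)` and averaging gives metric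
compatibility of `(Γ + Γ*)/2`; subtracting them shows that `C(v, w, u) = h(w, (Γ* - Γ)(v, u))`,
which equals `∇h`, is symmetric in `w, u`. Torsion-freeness makes `Γ* - Γ` symmetric, so `C` is
also symmetric in `v, w`, hence totally symmetric. -/

noncomputable section

open Set

/-- ℝⁿ. -/
abbrev Vn (n : ℕ) : Type := Fin n → ℝ

/-- Bilinear forms on ℝⁿ (as continuous linear maps). -/
abbrev Biln (n : ℕ) : Type := Vn n →L[ℝ] Vn n →L[ℝ] ℝ

/-- Christoffel maps (values of a connection). -/
abbrev Chrn (n : ℕ) : Type := Vn n →L[ℝ] Vn n →L[ℝ] Vn n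

/-- The cubic field `∇h` formed from a metric field `h` and a Christoffel map `Γ`. -/
def nablaH {n : ℕ} (h : Vn n → Biln n) (Γ : Vn n → Chrn n) (x v w u : Vn n) : ℝ :=
  fderiv ℝ h x v w u - h x (Γ x v w) u - h x w (Γ x v u)

open Filter Topology ContinuousLinearMap

theorem fderiv_apply_comm_of_eventually_symm {𝕜 E F G : Type*} [NontriviallyNormedField 𝕜]
    [NormedAddCommGroup E] [NormedSpace 𝕜 E] [NormedAddCommGroup F] [NormedSpace 𝕜 F]
    [NormedAddCommGroup G] [NormedSpace 𝕜 G] {f : E → F →L[𝕜] F →L[𝕜] G} {x : E}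
    (hf : ∀ᶠ y in 𝓝 x, ∀ v w, f y v w = f y w v) (v : E) (w u : F) :
    fderiv 𝕜 f x v w u = fderiv 𝕜 f x v u w := by
  -- `fderiv` commutes with a linear isometry equivalence even where `f` is not differentiable.
  have hflip : f =ᶠ[𝓝 x] flipₗᵢ 𝕜 F F G ∘ f :=
    hf.mono fun y hy ↦ ext fun w ↦ ext fun u ↦ hy w u
  have hD := LinearIsometryEquiv.comp_fderiv (𝕜 := 𝕜) (G := E) (F := F →L[𝕜] F →L[𝕜] G)
    (flipₗᵢ 𝕜 F F G) (f := f) (x := x)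
  rw [← hflip.fderiv_eq] at hD
  conv_lhs => rw [hD]
  rfl

section DualPair

variable {E : Type*} [NormedAddCommGroup E] [NormedSpace ℝ E]
  {g : E →L[ℝ] E →L[ℝ] ℝ} {Dg : E →L[ℝ] E →L[ℝ] E →L[ℝ] ℝ} {Γ Γs : E →L[ℝ] E →L[ℝ] E}

theorem sub_apply_comm_of_dual (hg : ∀ v w, g v w = g w v) (hDg : ∀ v w u, Dg v w u = Dg v u w)
    (hdual : ∀ v w u, Dg v w u = g (Γ v w) u + g w (Γs v u)) (v w u : E) :
    g w ((Γs - Γ) v u) = g u ((Γs - Γ) v w) := by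
  simp only [sub_apply, map_sub]
  linarith [hdual v w u, hdual v u w, hDg v w u, hg (Γ v w) u, hg (Γ v u) w]

theorem average_metric_compatible_of_dual (hg : ∀ v w, g v w = g w v)
    (hDg : ∀ v w u, Dg v w u = Dg v u w)
    (hdual : ∀ v w u, Dg v w u = g (Γ v w) u + g w (Γs v u)) (v w u : E) :
    Dg v w u = g (((1 : ℝ) / 2) • (Γ v w + Γs v w)) u
      + g w (((1 : ℝ) / 2) • (Γ v u + Γs v u)) := by
  simp only [map_smul, map_add, smul_apply, add_apply, smul_eq_mul]
  linarith [hdual v w u, hdual v u w, hDg v w u, hg (Γ v u) w, hg u (Γs v w)]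

end DualPair

theorem apply_comm_left_of_comm_right {E : Type*} [NormedAddCommGroup E] [NormedSpace ℝ E]
    {g : E →L[ℝ] E →L[ℝ] ℝ} {K : E →L[ℝ] E →L[ℝ] E} (hK : ∀ v w, K v w = K w v)
    (hC : ∀ v w u, g w (K v u) = g u (K v w)) (v w u : E) :
    g w (K v u) = g v (K w u) := by
  rw [hC, hK, hC]

theorem statement0_general {n : ℕ} (U : Set (Vn n)) (hUopen : IsOpen U)
    (h : Vn n → Biln n)
    (hsymm : ∀ x ∈ U, ∀ v w : Vn n, h x v w = h x w v)
    (Γ Γs : Vn n → Chrn n)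
    (hdual : ∀ x ∈ U, ∀ v w u : Vn n,
      fderiv ℝ h x v w u = h x (Γ x v w) u + h x w (Γs x v u))
    (hΓtf : ∀ x ∈ U, ∀ v w : Vn n, Γ x v w = Γ x w v)
    (hΓstf : ∀ x ∈ U, ∀ v w : Vn n, Γs x v w = Γs x w v) :
    -- (iii) ∇h is totally symmetric
    (∀ x ∈ U, ∀ v w u : Vn n,
        nablaH h Γ x v w u = nablaH h Γ x w v u ∧
        nablaH h Γ x v w u = nablaH h Γ x v u w) ∧
    -- (iv) Γ⁰ = (Γ + Γ*)/2 is torsion-free …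
    (∀ x ∈ U, ∀ v w : Vn n,
        ((1:ℝ)/2) • (Γ x v w + Γs x v w) = ((1:ℝ)/2) • (Γ x w v + Γs x w v)) ∧
    -- … and metric-compatible, i.e. it is a Levi-Civita connection of h
    (∀ x ∈ U, ∀ v w u : Vn n,
        fderiv ℝ h x v w u
          = h x (((1:ℝ)/2) • (Γ x v w + Γs x v w)) u
            + h x w (((1:ℝ)/2) • (Γ x v u + Γs x v u))) := by
  have hDh : ∀ x ∈ U, ∀ v w u, fderiv ℝ h x v w u = fderiv ℝ h x v u w := fun x hx ↦
    fderiv_apply_comm_of_eventually_symm (eventually_of_mem (hUopen.mem_nhds hx) hsymm)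
  have hC : ∀ x ∈ U, ∀ v w u, h x w ((Γs x - Γ x) v u) = h x u ((Γs x - Γ x) v w) :=
    fun x hx ↦ sub_apply_comm_of_dual (hsymm x hx) (hDh x hx) (hdual x hx)
  have hnablaH : ∀ x ∈ U, ∀ v w u, nablaH h Γ x v w u = h x w ((Γs x - Γ x) v u) := by
    intro x hx v w u
    rw [nablaH, hdual x hx]
    simp only [sub_apply, map_sub]
    ring
  refine ⟨fun x hx v w u ↦ ?_, fun x hx v w ↦ by rw [hΓtf x hx, hΓstf x hx],
    fun x hx ↦ average_metric_compatible_of_dual (hsymm x hx) (hDh x hx) (hdual x hx)⟩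
  have hK : ∀ v w, (Γs x - Γ x) v w = (Γs x - Γ x) w v := fun v w ↦ by
    simp only [sub_apply, hΓtf x hx v, hΓstf x hx v]
  simp only [hnablaH x hx]
  exact ⟨apply_comm_left_of_comm_right hK (hC x hx) v w u, hC x hx v w u⟩

/-- Paper's Proposition 2.1, case (i)+(ii) ⇒ (iii)+(iv):
if `Γ` and `Γ*` are mutually dual w.r.t. a nondegenerate metric field `h`
and both are torsion-free, then `∇h` is totally symmetric and
`Γ⁰ = (Γ + Γ*)/2` is a Levi-Civita connection of `h`. -/
theorem statement0 {n : ℕ} (hn : 1 ≤ n) (U : Set (Vn n)) (hUopen : IsOpen U)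
    (h : Vn n → Biln n) (hsmooth : ContDiffOn ℝ (⊤ : ℕ∞) h U)
    (hsymm : ∀ x ∈ U, ∀ v w : Vn n, h x v w = h x w v)
    (hnondeg : ∀ x ∈ U, ∀ v : Vn n, (∀ w : Vn n, h x v w = 0) → v = 0)
    (Γ Γs : Vn n → Chrn n)
    (hΓsmooth : ContDiffOn ℝ (⊤ : ℕ∞) Γ U) (hΓssmooth : ContDiffOn ℝ (⊤ : ℕ∞) Γs U)
    (hdual : ∀ x ∈ U, ∀ v w u : Vn n,
      fderiv ℝ h x v w u = h x (Γ x v w) u + h x w (Γs x v u))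
    (hΓtf : ∀ x ∈ U, ∀ v w : Vn n, Γ x v w = Γ x w v)
    (hΓstf : ∀ x ∈ U, ∀ v w : Vn n, Γs x v w = Γs x w v) :
    -- (iii) ∇h is totally symmetric
    (∀ x ∈ U, ∀ v w u : Vn n,
        nablaH h Γ x v w u = nablaH h Γ x w v u ∧
        nablaH h Γ x v w u = nablaH h Γ x v u w) ∧
    -- (iv) Γ⁰ = (Γ + Γ*)/2 is torsion-free …
    (∀ x ∈ U, ∀ v w : Vn n,
        ((1:ℝ)/2) • (Γ x v w + Γs x v w) = ((1:ℝ)/2) • (Γ x w v + Γs x w v)) ∧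
    -- … and metric-compatible, i.e. it is a Levi-Civita connection of h
    (∀ x ∈ U, ∀ v w u : Vn n,
        fderiv ℝ h x v w u
          = h x (((1:ℝ)/2) • (Γ x v w + Γs x v w)) u
            + h x w (((1:ℝ)/2) • (Γ x v u + Γs x v u))) :=
  statement0_general U hUopen h hsymm Γ Γs hdual hΓtf hΓstf
end
end

section
/- Let h be a nondegenerate metric field on U and let Γ and Γ* be smooth Christoffel maps on U that are mutually dual with respect to h. If Γ is torsion-free and the cubic field ∇h (formed with Γ) is totally symmetric, then Γ* is torsion-free and (1/2)(Γ + Γ*) is a Levi-Civita connection of h. (Paper's Proposition 2.1, case (i)+(iii) ⇒ (ii)+(iv), in coordinates.) -/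
noncomputable section

open Set

/-- Paper's Proposition 2.1, case (i)+(iii) ⇒ (ii)+(iv):
if `Γ` and `Γ*` are mutually dual w.r.t. a nondegenerate metric field `h`,
`Γ` is torsion-free and `∇h` is totally symmetric, then `Γ*` is torsion-free
and `Γ⁰ = (Γ + Γ*)/2` is a Levi-Civita connection of `h`. -/
theorem statement1 {n : ℕ} (hn : 1 ≤ n) (U : Set (Vn n)) (hUopen : IsOpen U)
    (h : Vn n → Biln n) (hsmooth : ContDiffOn ℝ (⊤ : ℕ∞) h U)
    (hsymm : ∀ x ∈ U, ∀ v w : Vn n, h x v w = h x w v)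
    (hnondeg : ∀ x ∈ U, ∀ v : Vn n, (∀ w : Vn n, h x v w = 0) → v = 0)
    (Γ Γs : Vn n → Chrn n)
    (hΓsmooth : ContDiffOn ℝ (⊤ : ℕ∞) Γ U) (hΓssmooth : ContDiffOn ℝ (⊤ : ℕ∞) Γs U)
    (hdual : ∀ x ∈ U, ∀ v w u : Vn n,
      fderiv ℝ h x v w u = h x (Γ x v w) u + h x w (Γs x v u))
    (hΓtf : ∀ x ∈ U, ∀ v w : Vn n, Γ x v w = Γ x w v)
    (hCsymm : ∀ x ∈ U, ∀ v w u : Vn n,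
        nablaH h Γ x v w u = nablaH h Γ x w v u ∧
        nablaH h Γ x v w u = nablaH h Γ x v u w) :
    -- (ii) Γ* is torsion-free
    (∀ x ∈ U, ∀ v w : Vn n, Γs x v w = Γs x w v) ∧
    -- (iv) Γ⁰ = (Γ + Γ*)/2 is torsion-free …
    (∀ x ∈ U, ∀ v w : Vn n,
        ((1:ℝ)/2) • (Γ x v w + Γs x v w) = ((1:ℝ)/2) • (Γ x w v + Γs x w v)) ∧
    -- … and metric-compatible, i.e. it is a Levi-Civita connection of h
    (∀ x ∈ U, ∀ v w u : Vn n,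
        fderiv ℝ h x v w u
          = h x (((1:ℝ)/2) • (Γ x v w + Γs x v w)) u
            + h x w (((1:ℝ)/2) • (Γ x v u + Γs x v u))) := by
  have key : ∀ x ∈ U, ∀ v w u : Vn n,
      nablaH h Γ x v w u = h x w (Γs x v u) - h x w (Γ x v u) := by
    intro x hx v w u
    simp only [nablaH, hdual x hx]
    ring
  have tf : ∀ x ∈ U, ∀ v w : Vn n, Γs x v w = Γs x w v := by
    intro x hx v w
    have hz : ∀ u : Vn n, h x (Γs x v w - Γs x w v) u = 0 := by
      intro u
      have e1 := key x hx v u w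
      have e2 := key x hx w u v
      have e3 : nablaH h Γ x v u w = nablaH h Γ x w u v := by
        rw [(hCsymm x hx v u w).2, (hCsymm x hx v w u).1, (hCsymm x hx w v u).2]
      have hΓ := hΓtf x hx v w
      rw [e3, e2, hΓ] at e1
      have e4 : h x u (Γs x v w) = h x u (Γs x w v) := by linarith
      simp only [map_sub, ContinuousLinearMap.sub_apply]
      rw [hsymm x hx _ u, hsymm x hx _ u, e4, sub_self]
    exact sub_eq_zero.mp (hnondeg x hx _ hz)
  refine ⟨tf, ?_, ?_⟩
  · intro x hx v w
    rw [hΓtf x hx v w, tf x hx v w]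
  · intro x hx v w u
    rw [hdual x hx]
    have e1 := key x hx v w u
    have e2 := key x hx v u w
    rw [(hCsymm x hx v w u).2, e2] at e1
    have e3 : h x u (Γs x v w) = h x (Γs x v w) u := hsymm x hx _ _
    have e4 : h x u (Γ x v w) = h x (Γ x v w) u := hsymm x hx _ _
    simp only [map_add, map_smul, ContinuousLinearMap.add_apply,
      ContinuousLinearMap.smul_apply, smul_eq_mul]
    linarith
end
end

section
/- Let h be a nondegenerate metric field on U and let Γ and Γ* be smooth Christoffel maps on U that are mutually dual with respect to h. If the cubic field ∇h (formed with Γ) is totally symmetric and (1/2)(Γ + Γ*) is a Levi-Civita connection of h, then both Γ and Γ* are torsion-free. (Paper's Proposition 2.1, case (iii)+(iv) ⇒ (i)+(ii), in coordinates.) -/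
noncomputable section

open Set

/-- Paper's Proposition 2.1, case (iii)+(iv) ⇒ (i)+(ii):
if `Γ` and `Γ*` are mutually dual w.r.t. a nondegenerate metric field `h`,
`∇h` is totally symmetric and `Γ⁰ = (Γ + Γ*)/2` is a Levi-Civita connection of `h`,
then both `Γ` and `Γ*` are torsion-free. -/
theorem statement2 {n : ℕ} (hn : 1 ≤ n) (U : Set (Vn n)) (hUopen : IsOpen U)
    (h : Vn n → Biln n) (hsmooth : ContDiffOn ℝ (⊤ : ℕ∞) h U)
    (hsymm : ∀ x ∈ U, ∀ v w : Vn n, h x v w = h x w v)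
    (hnondeg : ∀ x ∈ U, ∀ v : Vn n, (∀ w : Vn n, h x v w = 0) → v = 0)
    (Γ Γs : Vn n → Chrn n)
    (hΓsmooth : ContDiffOn ℝ (⊤ : ℕ∞) Γ U) (hΓssmooth : ContDiffOn ℝ (⊤ : ℕ∞) Γs U)
    (hdual : ∀ x ∈ U, ∀ v w u : Vn n,
      fderiv ℝ h x v w u = h x (Γ x v w) u + h x w (Γs x v u))
    -- (iii) ∇h is totally symmetric
    (hCsymm : ∀ x ∈ U, ∀ v w u : Vn n,
        nablaH h Γ x v w u = nablaH h Γ x w v u ∧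
        nablaH h Γ x v w u = nablaH h Γ x v u w)
    -- (iv) Γ⁰ = (Γ + Γ*)/2 is a Levi-Civita connection of h: torsion-free …
    (hΓ0tf : ∀ x ∈ U, ∀ v w : Vn n,
        ((1:ℝ)/2) • (Γ x v w + Γs x v w) = ((1:ℝ)/2) • (Γ x w v + Γs x w v))
    -- … and metric-compatible
    (hΓ0metric : ∀ x ∈ U, ∀ v w u : Vn n,
        fderiv ℝ h x v w u
          = h x (((1:ℝ)/2) • (Γ x v w + Γs x v w)) u
            + h x w (((1:ℝ)/2) • (Γ x v u + Γs x v u))) :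
    -- (i) and (ii): both Γ and Γ* are torsion-free
    (∀ x ∈ U, ∀ v w : Vn n, Γ x v w = Γ x w v) ∧
    (∀ x ∈ U, ∀ v w : Vn n, Γs x v w = Γs x w v) := by
  -- reformulate nablaH via duality
  have key : ∀ x ∈ U, ∀ v w u : Vn n,
      nablaH h Γ x v w u = h x w (Γs x v u - Γ x v u) := by
    intro x hx v w u
    have hd := hdual x hx v w u
    simp only [nablaH, map_sub, hd]
    ring
  -- symmetry of D := Γs - Γ under swapping (w,u) and (v,w) slots
  have S2 : ∀ x ∈ U, ∀ v w u : Vn n,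
      h x w (Γs x v u - Γ x v u) = h x u (Γs x v w - Γ x v w) := by
    intro x hx v w u
    have := (hCsymm x hx v w u).2
    rwa [key x hx v w u, key x hx v u w] at this
  have S1 : ∀ x ∈ U, ∀ v w u : Vn n,
      h x w (Γs x v u - Γ x v u) = h x v (Γs x w u - Γ x w u) := by
    intro x hx v w u
    have := (hCsymm x hx v w u).1
    rwa [key x hx v w u, key x hx w v u] at this
  -- D is symmetric
  have hDsymm : ∀ x ∈ U, ∀ v w : Vn n,
      Γs x v w - Γ x v w = Γs x w v - Γ x w v := by
    intro x hx v w
    apply sub_eq_zero.mp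
    apply hnondeg x hx
    intro u
    have e1 : h x u (Γs x v w - Γ x v w) = h x u (Γs x w v - Γ x w v) := by
      rw [S2 x hx v u w, S1 x hx v w u, S2 x hx w v u]
    have := hsymm x hx ((Γs x v w - Γ x v w) - (Γs x w v - Γ x w v)) u
    rw [this, map_sub, e1, sub_self]
  -- sum is symmetric too
  have hSum : ∀ x ∈ U, ∀ v w : Vn n,
      Γ x v w + Γs x v w = Γ x w v + Γs x w v := by
    intro x hx v w
    have := hΓ0tf x hx v w
    exact smul_right_injective _ (by norm_num : ((1:ℝ)/2) ≠ 0) this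
  constructor
  · intro x hx v w
    have h1 := hDsymm x hx v w
    have h2 := hSum x hx v w
    funext i
    have := congrFun h1 i
    have := congrFun h2 i
    simp only [Pi.sub_apply, Pi.add_apply] at *
    linarith
  · intro x hx v w
    have h1 := hDsymm x hx v w
    have h2 := hSum x hx v w
    funext i
    have := congrFun h1 i
    have := congrFun h2 i
    simp only [Pi.sub_apply, Pi.add_apply] at *
    linarith
end
end

section
/- Let h be a nondegenerate metric field on U and let C be a smooth cubic field on U that is totally symmetric. Then there exist unique smooth Christoffel maps Γ and Γ* on U such that for all x ∈ U and v, w, u ∈ ℝⁿ: h x (Γ x v w) u = (1/2)( (fderiv ℝ h x v) w u + (fderiv ℝ h x w) v u − (fderiv ℝ h x u) v w ) − (1/2) C x v w u, and h x (Γ* x v w) u = (1/2)( (fderiv ℝ h x v) w u + (fderiv ℝ h x w) v u − (fderiv ℝ h x u) v w ) + (1/2) C x v w u. Moreover Γ and Γ* are torsion-free, mutually dual with respect to h, and ∇h (formed with Γ) equals C. (Paper's Proposition 2.3, in coordinates.) -/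
noncomputable section

open Set

/-- Cubic fields: smooth families of trilinear forms. -/
abbrev Cubn (n : ℕ) : Type := Vn n →L[ℝ] Vn n →L[ℝ] Vn n →L[ℝ] ℝ

noncomputable instance (n : ℕ) : NormedAddCommGroup (Cubn n) :=
  ContinuousLinearMap.toNormedAddCommGroup (𝕜 := ℝ) (𝕜₂ := ℝ)
    (E := Vn n) (F := Vn n →L[ℝ] Vn n →L[ℝ] ℝ) (σ₁₂ := RingHom.id ℝ)

noncomputable instance (n : ℕ) : NormedSpace ℝ (Cubn n) :=
  ContinuousLinearMap.toNormedSpace (𝕜 := ℝ) (𝕜₂ := ℝ)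
    (E := Vn n) (F := Vn n →L[ℝ] Vn n →L[ℝ] ℝ) (σ₁₂ := RingHom.id ℝ)

/-! Since `h x` is nondegenerate on a finite-dimensional space, `v ↦ h x v` is an isomorphism onto
the dual, so a Christoffel map is determined by its lowered form `(v, w, u) ↦ h x (Γ x v w) u`;
`Γ` and `Γ*` are obtained by raising the index of the prescribed right-hand sides, and they are
smooth because inversion of linear isomorphisms is. Symmetry of `h` makes `∂h` symmetric in its
last two slots, and then torsion-freeness, duality and `∇h = C` are linear identities between the
values of `∂h` and `C`. They hold for the whole family `h (Γ_c v w) u = ½ (∂_v h (w, u) +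
∂_w h (v, u) - ∂_u h (v, w)) + c C (v, w, u)`: each `Γ_c` is torsion-free, `Γ_{-c}` and `Γ_c` are
dual, and `∇h = -2c C` for `Γ_c`. Here `Γ = Γ_{-1/2}` and `Γ* = Γ_{1/2}`. -/

open ContinuousLinearMap Filter Topology

section IndexRaising

variable {X : Type*} [NormedAddCommGroup X] [NormedSpace ℝ X]
  {E : Type*} [NormedAddCommGroup E] [NormedSpace ℝ E]
  {F : Type*} [NormedAddCommGroup F] [NormedSpace ℝ F]
  {V : Type*} [NormedAddCommGroup V] [NormedSpace ℝ V]

theorem ContinuousLinearMap.isInvertible_of_injective_of_finrank_eq [FiniteDimensional ℝ E]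
    [FiniteDimensional ℝ F] {f : E →L[ℝ] F} (hf : Function.Injective f)
    (hdim : Module.finrank ℝ E = Module.finrank ℝ F) : f.IsInvertible :=
  ⟨(LinearMap.linearEquivOfInjective (f : E →ₗ[ℝ] F) hf hdim).toContinuousLinearEquiv, rfl⟩

theorem ContinuousLinearMap.isInvertible_of_nondegenerate [FiniteDimensional ℝ E]
    {B : E →L[ℝ] E →L[ℝ] ℝ} (hB : ∀ v, (∀ w, B v w = 0) → v = 0) : B.IsInvertible :=
  isInvertible_of_injective_of_finrank_eq
    ((injective_iff_map_eq_zero B).2 fun v hv => hB v fun w => by rw [hv, zero_apply])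
    (Subspace.dual_finrank_eq.symm.trans LinearMap.toContinuousLinearMap.finrank_eq)

def raiseIndex (B : E →L[ℝ] F) (T : V →L[ℝ] V →L[ℝ] F) : V →L[ℝ] V →L[ℝ] E :=
  (compL ℝ V F E B.inverse).comp T

theorem ContinuousLinearMap.IsInvertible.apply_raiseIndex {B : E →L[ℝ] F} (hB : B.IsInvertible)
    (T : V →L[ℝ] V →L[ℝ] F) (v w : V) : B (raiseIndex B T v w) = T v w :=
  hB.self_apply_inverse _

theorem ContDiffOn.raiseIndex [CompleteSpace E] {k : WithTop ℕ∞} {U : Set X}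
    {B : X → E →L[ℝ] F} {T : X → V →L[ℝ] V →L[ℝ] F} (hB : ContDiffOn ℝ k B U)
    (hBinv : ∀ x ∈ U, (B x).IsInvertible) (hT : ContDiffOn ℝ k T U) :
    ContDiffOn ℝ k (fun x => raiseIndex (B x) (T x)) U := by
  have hinv : ContDiffOn ℝ k (fun x => (B x).inverse) U := fun x hx =>
    (hBinv x hx).contDiffAt_map_inverse.comp_contDiffWithinAt x (hB x hx)
  exact ((compL ℝ V F E).contDiff.comp_contDiffOn hinv).clm_comp hT

end IndexRaising

section Symmetry

variable {X : Type*} [NormedAddCommGroup X] [NormedSpace ℝ X]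
  {E : Type*} [NormedAddCommGroup E] [NormedSpace ℝ E]
  {G : Type*} [NormedAddCommGroup G] [NormedSpace ℝ G]

theorem fderiv_apply_comm_of_eventually_comm {h : X → E →L[ℝ] E →L[ℝ] G} {x : X}
    (hsymm : ∀ᶠ y in 𝓝 x, ∀ v w, h y v w = h y w v) (a : X) (v w : E) :
    fderiv ℝ h x a v w = fderiv ℝ h x a w v := by
  have hflip : flipₗᵢ ℝ E E G ∘ h =ᶠ[𝓝 x] h := by
    filter_upwards [hsymm] with y hy
    show flipₗᵢ ℝ E E G (h y) = h y
    ext v w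
    exact hy w v
  have hD : fderiv ℝ h x = (flipₗᵢ ℝ E E G : (E →L[ℝ] E →L[ℝ] G) →L[ℝ] _).comp (fderiv ℝ h x) :=
    hflip.fderiv_eq.symm.trans <| LinearIsometryEquiv.comp_fderiv (𝕜 := ℝ)
      (E := E →L[ℝ] E →L[ℝ] G) (F := E →L[ℝ] E →L[ℝ] G) (G := X) (flipₗᵢ ℝ E E G)
  exact congr($hD a v w)

end Symmetry

section Trilinear

variable {E : Type*} [NormedAddCommGroup E] [NormedSpace ℝ E]
  {G : Type*} [NormedAddCommGroup G] [NormedSpace ℝ G]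

-- Instance search fails to find the operator norm on spaces of trilinear maps.
local instance : NormedAddCommGroup (E →L[ℝ] E →L[ℝ] E →L[ℝ] G) :=
  ContinuousLinearMap.toNormedAddCommGroup (𝕜 := ℝ) (𝕜₂ := ℝ) (E := E) (F := E →L[ℝ] E →L[ℝ] G)
    (σ₁₂ := RingHom.id ℝ)

local instance : NormedSpace ℝ (E →L[ℝ] E →L[ℝ] E →L[ℝ] G) :=
  ContinuousLinearMap.toNormedSpace (𝕜 := ℝ) (𝕜₂ := ℝ) (E := E) (F := E →L[ℝ] E →L[ℝ] G)
    (σ₁₂ := RingHom.id ℝ)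

def rotateTrilinear :
    (E →L[ℝ] E →L[ℝ] E →L[ℝ] G) →L[ℝ] (E →L[ℝ] E →L[ℝ] E →L[ℝ] G) :=
  (compL ℝ E (E →L[ℝ] E →L[ℝ] G) (E →L[ℝ] E →L[ℝ] G)
    (flipₗᵢ ℝ E E G : (E →L[ℝ] E →L[ℝ] G) →L[ℝ] (E →L[ℝ] E →L[ℝ] G))).comp
    (flipₗᵢ ℝ E E (E →L[ℝ] G) : (E →L[ℝ] E →L[ℝ] E →L[ℝ] G) →L[ℝ] _)

def christoffelForm :
    (E →L[ℝ] E →L[ℝ] E →L[ℝ] G) →L[ℝ] (E →L[ℝ] E →L[ℝ] E →L[ℝ] G) :=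
  (1 / 2 : ℝ) • (ContinuousLinearMap.id ℝ _ + (flipₗᵢ ℝ E E (E →L[ℝ] G) :
    (E →L[ℝ] E →L[ℝ] E →L[ℝ] G) →L[ℝ] (E →L[ℝ] E →L[ℝ] E →L[ℝ] G)) - rotateTrilinear)

theorem christoffelForm_apply (D : E →L[ℝ] E →L[ℝ] E →L[ℝ] G) (v w u : E) :
    christoffelForm D v w u = (1 / 2 : ℝ) • (D v w u + D w v u - D u v w) := rfl

def christoffel (h : E → E →L[ℝ] E →L[ℝ] G) (C : E → E →L[ℝ] E →L[ℝ] E →L[ℝ] G) (c : ℝ)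
    (x : E) : E →L[ℝ] E →L[ℝ] E :=
  raiseIndex (h x) (christoffelForm (fderiv ℝ h x) + c • C x)

variable {h : E → E →L[ℝ] E →L[ℝ] G} {C : E → E →L[ℝ] E →L[ℝ] E →L[ℝ] G} {x : E}

theorem apply_christoffel_apply (hx : (h x).IsInvertible) (c : ℝ) (v w u : E) :
    h x (christoffel h C c x v w) u = christoffelForm (fderiv ℝ h x) v w u + c • C x v w u := by
  rw [christoffel, hx.apply_raiseIndex]
  rfl

theorem ContDiffOn.christoffel [CompleteSpace E] {m n : WithTop ℕ∞} {U : Set E}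
    (hh : ContDiffOn ℝ n h U) (hU : IsOpen U) (hmn : m + 1 ≤ n)
    (hinv : ∀ x ∈ U, (h x).IsInvertible) (hC : ContDiffOn ℝ m C U) (c : ℝ) :
    ContDiffOn ℝ m (christoffel h C c) U := by
  have hD : ContDiffOn ℝ m (fderiv ℝ h) U := hh.fderiv_of_isOpen hU hmn
  have hT : ContDiffOn ℝ m (fun x => christoffelForm (fderiv ℝ h x) + c • C x) U :=
    ((christoffelForm (E := E) (G := G)).contDiff.comp_contDiffOn hD).add (hC.const_smul c)
  exact (hh.of_le (le_trans le_self_add hmn)).raiseIndex hinv hT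

end Trilinear

section Pointwise

variable {E : Type*} [NormedAddCommGroup E] [NormedSpace ℝ E]
  {B : E →L[ℝ] E →L[ℝ] ℝ} {D C : E →L[ℝ] E →L[ℝ] E →L[ℝ] ℝ} {Γ Γs : E →L[ℝ] E →L[ℝ] E}
  {c : ℝ}

theorem christoffelForm_comm (hD : ∀ a v w, D a v w = D a w v) (v w u : E) :
    christoffelForm D v w u = christoffelForm D w v u := by
  rw [christoffelForm_apply, christoffelForm_apply, smul_eq_mul, smul_eq_mul, hD u]
  ring

theorem comm_of_apply_eq_christoffelForm (hB : Function.Injective B)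
    (hD : ∀ a v w, D a v w = D a w v) (hC : ∀ v w u, C v w u = C w v u)
    (hΓ : ∀ v w u, B (Γ v w) u = christoffelForm D v w u + c * C v w u) (v w : E) :
    Γ v w = Γ w v :=
  hB <| ext fun u => by rw [hΓ, hΓ, christoffelForm_comm hD, hC]

theorem eq_add_of_apply_eq_christoffelForm (hBsymm : ∀ v w, B v w = B w v)
    (hD : ∀ a v w, D a v w = D a w v) (hC : ∀ v w u, C v w u = C v u w)
    (hΓ : ∀ v w u, B (Γ v w) u = christoffelForm D v w u + -c * C v w u)
    (hΓs : ∀ v w u, B (Γs v w) u = christoffelForm D v w u + c * C v w u) (v w u : E) :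
    D v w u = B (Γ v w) u + B w (Γs v u) := by
  rw [hBsymm w, hΓ, hΓs, christoffelForm_apply, christoffelForm_apply, smul_eq_mul,
    smul_eq_mul, hD v u, hC v u]
  ring

theorem sub_sub_eq_of_apply_eq_christoffelForm (hBsymm : ∀ v w, B v w = B w v)
    (hD : ∀ a v w, D a v w = D a w v) (hC : ∀ v w u, C v w u = C v u w)
    (hΓ : ∀ v w u, B (Γ v w) u = christoffelForm D v w u + c * C v w u) (v w u : E) :
    D v w u - B (Γ v w) u - B w (Γ v u) = -(2 * c) * C v w u := by
  rw [hBsymm w, hΓ, hΓ, christoffelForm_apply, christoffelForm_apply, smul_eq_mul,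
    smul_eq_mul, hD v u, hC v u]
  ring

end Pointwise

theorem statement3_general {n : ℕ} (U : Set (Vn n)) (hUopen : IsOpen U)
    (h : Vn n → Biln n) (hsmooth : ContDiffOn ℝ (⊤ : ℕ∞) h U)
    (hsymm : ∀ x ∈ U, ∀ v w : Vn n, h x v w = h x w v)
    (hnondeg : ∀ x ∈ U, ∀ v : Vn n, (∀ w : Vn n, h x v w = 0) → v = 0)
    (C : Vn n → Cubn n) (hCsmooth : ContDiffOn ℝ (⊤ : ℕ∞) C U)
    (hCsymm : ∀ x ∈ U, ∀ v w u : Vn n,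
        C x v w u = C x w v u ∧ C x v w u = C x v u w) :
    ∃ Γ Γs : Vn n → Chrn n,
      ContDiffOn ℝ (⊤ : ℕ∞) Γ U ∧ ContDiffOn ℝ (⊤ : ℕ∞) Γs U ∧
      -- the defining formula for Γ …
      (∀ x ∈ U, ∀ v w u : Vn n,
          h x (Γ x v w) u
            = ((1:ℝ)/2) * (fderiv ℝ h x v w u + fderiv ℝ h x w v u
                - fderiv ℝ h x u v w)
              - ((1:ℝ)/2) * C x v w u) ∧
      -- … and for Γ*
      (∀ x ∈ U, ∀ v w u : Vn n,
          h x (Γs x v w) u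
            = ((1:ℝ)/2) * (fderiv ℝ h x v w u + fderiv ℝ h x w v u
                - fderiv ℝ h x u v w)
              + ((1:ℝ)/2) * C x v w u) ∧
      -- Γ and Γ* are torsion-free
      (∀ x ∈ U, ∀ v w : Vn n, Γ x v w = Γ x w v) ∧
      (∀ x ∈ U, ∀ v w : Vn n, Γs x v w = Γs x w v) ∧
      -- mutually dual with respect to h
      (∀ x ∈ U, ∀ v w u : Vn n,
          fderiv ℝ h x v w u = h x (Γ x v w) u + h x w (Γs x v u)) ∧
      -- ∇h (formed with Γ) equals C
      (∀ x ∈ U, ∀ v w u : Vn n, nablaH h Γ x v w u = C x v w u) ∧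
      -- uniqueness: any Christoffel maps satisfying the defining formulas agree
      -- with Γ and Γ* on U
      (∀ Γ' Γs' : Vn n → Chrn n,
          (∀ x ∈ U, ∀ v w u : Vn n,
              h x (Γ' x v w) u
                = ((1:ℝ)/2) * (fderiv ℝ h x v w u + fderiv ℝ h x w v u
                    - fderiv ℝ h x u v w)
                  - ((1:ℝ)/2) * C x v w u) →
          (∀ x ∈ U, ∀ v w u : Vn n,
              h x (Γs' x v w) u
                = ((1:ℝ)/2) * (fderiv ℝ h x v w u + fderiv ℝ h x w v u
                    - fderiv ℝ h x u v w)
                  + ((1:ℝ)/2) * C x v w u) →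
          ∀ x ∈ U, ∀ v w : Vn n, Γ' x v w = Γ x v w ∧ Γs' x v w = Γs x v w) := by
  have hinv : ∀ x ∈ U, (h x).IsInvertible := fun x hx =>
    isInvertible_of_nondegenerate (hnondeg x hx)
  have hD : ∀ x ∈ U, ∀ a v w, fderiv ℝ h x a v w = fderiv ℝ h x a w v := fun x hx =>
    fderiv_apply_comm_of_eventually_comm (eventually_of_mem (hUopen.mem_nhds hx) hsymm)
  have hC₁₂ : ∀ x ∈ U, ∀ v w u, C x v w u = C x w v u := fun x hx v w u => (hCsymm x hx v w u).1
  have hC₂₃ : ∀ x ∈ U, ∀ v w u, C x v w u = C x v u w := fun x hx v w u => (hCsymm x hx v w u).2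
  have hΓ : ∀ c, ∀ x ∈ U, ∀ v w u, h x (christoffel h C c x v w) u
      = christoffelForm (fderiv ℝ h x) v w u + c * C x v w u := fun c x hx =>
    apply_christoffel_apply (hinv x hx) c
  have hformula : ∀ c, ∀ x ∈ U, ∀ v w u, h x (christoffel h C c x v w) u
      = 1 / 2 * (fderiv ℝ h x v w u + fderiv ℝ h x w v u - fderiv ℝ h x u v w)
        + c * C x v w u := by
    intro c x hx v w u
    rw [hΓ c x hx, christoffelForm_apply, smul_eq_mul]
  have htorsion : ∀ c, ∀ x ∈ U, ∀ v w, christoffel h C c x v w = christoffel h C c x w v :=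
    fun c x hx => comm_of_apply_eq_christoffelForm (hinv x hx).injective (hD x hx) (hC₁₂ x hx)
      (hΓ c x hx)
  refine ⟨christoffel h C (-(1 / 2)), christoffel h C (1 / 2),
    hsmooth.christoffel hUopen le_rfl hinv hCsmooth _,
    hsmooth.christoffel hUopen le_rfl hinv hCsmooth _,
    fun x hx v w u => by rw [hformula _ x hx]; ring, hformula _,
    htorsion _, htorsion _,
    fun x hx => eq_add_of_apply_eq_christoffelForm (hsymm x hx) (hD x hx) (hC₂₃ x hx)
      (hΓ _ x hx) (hΓ _ x hx),
    fun x hx v w u => ?_,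
    fun Γ' Γs' hΓ' hΓs' x hx v w =>
      ⟨(hinv x hx).injective <| ext fun u => ?_, (hinv x hx).injective <| ext fun u => ?_⟩⟩
  · rw [nablaH, sub_sub_eq_of_apply_eq_christoffelForm (hsymm x hx) (hD x hx) (hC₂₃ x hx)
      (hΓ _ x hx)]
    norm_num
  · rw [hΓ' x hx, hformula _ x hx]
    ring
  · rw [hΓs' x hx, hformula _ x hx]

/-- Paper's Proposition 2.3: given a nondegenerate metric field `h` and a
totally symmetric smooth cubic field `C`, there exist unique smooth Christoffel
maps `Γ`, `Γ*` determined by the stated formulas; they are torsion-free,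
mutually dual with respect to `h`, and `∇h = C` (for `∇` formed with `Γ`). -/
theorem statement3 {n : ℕ} (hn : 1 ≤ n) (U : Set (Vn n)) (hUopen : IsOpen U)
    (h : Vn n → Biln n) (hsmooth : ContDiffOn ℝ (⊤ : ℕ∞) h U)
    (hsymm : ∀ x ∈ U, ∀ v w : Vn n, h x v w = h x w v)
    (hnondeg : ∀ x ∈ U, ∀ v : Vn n, (∀ w : Vn n, h x v w = 0) → v = 0)
    (C : Vn n → Cubn n) (hCsmooth : ContDiffOn ℝ (⊤ : ℕ∞) C U)
    (hCsymm : ∀ x ∈ U, ∀ v w u : Vn n,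
        C x v w u = C x w v u ∧ C x v w u = C x v u w) :
    ∃ Γ Γs : Vn n → Chrn n,
      ContDiffOn ℝ (⊤ : ℕ∞) Γ U ∧ ContDiffOn ℝ (⊤ : ℕ∞) Γs U ∧
      -- the defining formula for Γ …
      (∀ x ∈ U, ∀ v w u : Vn n,
          h x (Γ x v w) u
            = ((1:ℝ)/2) * (fderiv ℝ h x v w u + fderiv ℝ h x w v u
                - fderiv ℝ h x u v w)
              - ((1:ℝ)/2) * C x v w u) ∧
      -- … and for Γ*
      (∀ x ∈ U, ∀ v w u : Vn n,
          h x (Γs x v w) u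
            = ((1:ℝ)/2) * (fderiv ℝ h x v w u + fderiv ℝ h x w v u
                - fderiv ℝ h x u v w)
              + ((1:ℝ)/2) * C x v w u) ∧
      -- Γ and Γ* are torsion-free
      (∀ x ∈ U, ∀ v w : Vn n, Γ x v w = Γ x w v) ∧
      (∀ x ∈ U, ∀ v w : Vn n, Γs x v w = Γs x w v) ∧
      -- mutually dual with respect to h
      (∀ x ∈ U, ∀ v w u : Vn n,
          fderiv ℝ h x v w u = h x (Γ x v w) u + h x w (Γs x v u)) ∧
      -- ∇h (formed with Γ) equals C
      (∀ x ∈ U, ∀ v w u : Vn n, nablaH h Γ x v w u = C x v w u) ∧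
      -- uniqueness: any Christoffel maps satisfying the defining formulas agree
      -- with Γ and Γ* on U
      (∀ Γ' Γs' : Vn n → Chrn n,
          (∀ x ∈ U, ∀ v w u : Vn n,
              h x (Γ' x v w) u
                = ((1:ℝ)/2) * (fderiv ℝ h x v w u + fderiv ℝ h x w v u
                    - fderiv ℝ h x u v w)
                  - ((1:ℝ)/2) * C x v w u) →
          (∀ x ∈ U, ∀ v w u : Vn n,
              h x (Γs' x v w) u
                = ((1:ℝ)/2) * (fderiv ℝ h x v w u + fderiv ℝ h x w v u
                    - fderiv ℝ h x u v w)
                  + ((1:ℝ)/2) * C x v w u) →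
          ∀ x ∈ U, ∀ v w : Vn n, Γ' x v w = Γ x v w ∧ Γs' x v w = Γs x v w) :=
  statement3_general U hUopen h hsmooth hsymm hnondeg C hCsmooth hCsymm
end
end

section
/- Let ε > 0 and let f : ℝ → ℝ be continuous on [0, ε), differentiable on (0, ε), with f(0) = 0 and f(t) ≠ 0 for every t ∈ (0, ε). Then for every δ with 0 < δ < ε and every M > 0 there exists t ∈ (0, δ) such that |deriv f t| > M * |f t|; that is, the logarithmic derivative f'/f is unbounded on every right neighbourhood of 0. (The analytic core of the paper's Proposition 2.5: otherwise log|f| would be bounded near 0, contradicting f(0) = 0.) -/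
open Set

/-- The analytic core of the paper's Proposition 2.5: if `f` is continuous on `[0, ε)`,
differentiable on `(0, ε)`, vanishes at `0` and is nonzero on `(0, ε)`, then the
logarithmic derivative `f'/f` is unbounded on every right neighbourhood of `0`. -/
theorem statement4 (ε : ℝ) (hε : 0 < ε) (f : ℝ → ℝ)
    (hcont : ContinuousOn f (Ico 0 ε))
    (hdiff : ∀ t ∈ Ioo (0:ℝ) ε, DifferentiableAt ℝ f t)
    (h0 : f 0 = 0)
    (hne : ∀ t ∈ Ioo (0:ℝ) ε, f t ≠ 0) :
    ∀ δ : ℝ, 0 < δ → δ < ε → ∀ M : ℝ, 0 < M →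
      ∃ t ∈ Ioo (0:ℝ) δ, M * |f t| < |deriv f t| := by
  intro δ hδ hδε M hM
  by_contra h
  push_neg at h
  -- so |deriv f t| ≤ M * |f t| on (0, δ)
  set c : ℝ := δ / 2 with hc
  have hc0 : 0 < c := by positivity
  have hcδ : c < δ := by linarith [half_lt_self hδ]
  have hcε : c < ε := lt_trans hcδ hδε
  have hfc : f c ≠ 0 := hne c ⟨hc0, hcε⟩
  -- For every a ∈ (0, c], Gronwall gives ‖f c‖ ≤ ‖f a‖ * exp (M * c)
  have key : ∀ a ∈ Ioc (0:ℝ) c, ‖f c‖ ≤ ‖f a‖ * Real.exp (M * c) := by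
    intro a ha
    have hIcc : Icc a c ⊆ Ico 0 ε := fun x hx =>
      ⟨le_trans ha.1.le hx.1, lt_of_le_of_lt hx.2 hcε⟩
    have hIoo : ∀ x ∈ Ico a c, x ∈ Ioo (0:ℝ) ε := fun x hx =>
      ⟨lt_of_lt_of_le ha.1 hx.1, lt_trans hx.2 hcε⟩
    have hg := norm_le_gronwallBound_of_norm_deriv_right_le
      (f := f) (f' := deriv f) (δ := ‖f a‖) (K := M) (ε := 0) (a := a) (b := c)
      (hcont.mono hIcc)
      (fun x hx => ((hdiff x (hIoo x hx)).hasDerivAt).hasDerivWithinAt)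
      le_rfl
      (fun x hx => by
        have hx' := hIoo x hx
        have hb := h x ⟨hx'.1, lt_trans hx.2 hcδ⟩
        simpa [Real.norm_eq_abs] using hb)
      c ⟨ha.2, le_rfl⟩
    rw [gronwallBound_ε0] at hg
    calc ‖f c‖ ≤ ‖f a‖ * Real.exp (M * (c - a)) := hg
      _ ≤ ‖f a‖ * Real.exp (M * c) := by
          apply mul_le_mul_of_nonneg_left _ (norm_nonneg _)
          exact Real.exp_le_exp.2 (by nlinarith [ha.1])
  -- Take a → 0⁺: f a → f 0 = 0, so ‖f c‖ ≤ 0, contradiction.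
  have hcont0 : ContinuousWithinAt f (Ico 0 ε) 0 :=
    hcont 0 ⟨le_rfl, hε⟩
  have htend : Filter.Tendsto (fun a => ‖f a‖ * Real.exp (M * c)) (nhdsWithin 0 (Ioc 0 c))
      (nhds (‖f 0‖ * Real.exp (M * c))) := by
    apply Filter.Tendsto.mul_const
    apply Filter.Tendsto.norm
    exact hcont0.tendsto.mono_left (nhdsWithin_mono 0 (fun x hx =>
      ⟨hx.1.le, lt_of_le_of_lt hx.2 hcε⟩))
  rw [h0] at htend
  simp only [norm_zero, zero_mul] at htend
  have hne0 : (nhdsWithin (0:ℝ) (Ioc 0 c)).NeBot :=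
    mem_closure_iff_nhdsWithin_neBot.1 (by
      rw [closure_Ioc hc0.ne]; exact ⟨le_rfl, hc0.le⟩)
  have hle : ‖f c‖ ≤ 0 :=
    ge_of_tendsto htend (Filter.eventually_of_mem self_mem_nhdsWithin key)
  exact hfc (norm_le_zero_iff.1 hle)
end

section
/- Let h be a metric field on U. Suppose there are smooth vector fields e₁, …, eₙ : U → ℝⁿ whose values form a basis of ℝⁿ at every point of U, and smooth functions λ₁, …, λₙ : U → ℝ, such that h x (eᵢ x) (eⱼ x) = 0 for i ≠ j and h x (eᵢ x) (eᵢ x) = λᵢ x for all x ∈ U (an orthogonal frame diagonalizing h). Suppose further there are a point p ∈ U, an index k, a real ε > 0 and a C¹ curve c : [0, ε) → U with c(0) = p, λ_k(p) = 0 (so h is degenerate at p) and λ_k(c(t)) ≠ 0 for every t ∈ (0, ε). Then there exists no pair of smooth Christoffel maps Γ, Γ* on U that are mutually dual with respect to h; in other words, for every smooth connection Γ on U no smooth dual connection Γ* exists. (Paper's Proposition 2.5, in coordinates.) -/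
noncomputable section

open Set

/-!
Along the curve, `f t = λ_k (c t) = h (e_k, e_k)` solves a linear equation `f' = g f` with `g`
continuous. Indeed, differentiating `h (e_k, e_k)` and replacing `∂h` by the duality relation,
every term has the form `h (w, e_k)` or `h (e_k, w)`, and by orthogonality of the frame these equal
`a_k(w) λ_k`, where `a_k(w)` is the `k`-th frame coordinate of `w`, continuous in the base point.
Since `f 0 = λ_k p = 0`, Grönwall's inequality forces `f = 0` on `[0, ε)`.
-/

section FrameCoords

open Matrix

variable {𝕜 ι : Type*} [Fintype ι] [DecidableEq ι]

def frameCoords [Field 𝕜] (v : ι → ι → 𝕜) (w : ι → 𝕜) : ι → 𝕜 :=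
  w ᵥ* (Matrix.of v)⁻¹

theorem sum_frameCoords_smul [Field 𝕜] {v : ι → ι → 𝕜} (hv : LinearIndependent 𝕜 v)
    (w : ι → 𝕜) : ∑ j, frameCoords v w j • v j = w := by
  have hdet : IsUnit (Matrix.of v).det :=
    (isUnit_iff_isUnit_det _).1 (linearIndependent_rows_iff_isUnit.1 hv)
  calc ∑ j, frameCoords v w j • v j = frameCoords v w ᵥ* Matrix.of v :=
        (vecMul_eq_sum _ _).symm
    _ = w := by rw [frameCoords, vecMul_vecMul, nonsing_inv_mul _ hdet, vecMul_one]

theorem ContinuousOn.matrix_inv [NormedField 𝕜] {X : Type*} [TopologicalSpace X]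
    {A : X → Matrix ι ι 𝕜} {s : Set X} (hA : ContinuousOn A s)
    (hdet : ∀ x ∈ s, (A x).det ≠ 0) : ContinuousOn (fun x => (A x)⁻¹) s := fun x hx =>
  (continuousAt_matrix_inv _ (by
    simpa [Ring.inverse_eq_inv'] using continuousAt_inv₀ (hdet x hx))).comp_continuousWithinAt
    (hA x hx)

theorem ContinuousOn.frameCoords [NormedField 𝕜] {X : Type*} [TopologicalSpace X]
    {V : X → ι → ι → 𝕜} {w : X → ι → 𝕜} {s : Set X} (hV : ContinuousOn V s)
    (hind : ∀ x ∈ s, LinearIndependent 𝕜 (V x)) (hw : ContinuousOn w s) :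
    ContinuousOn (fun x => frameCoords (V x) (w x)) s := by
  have hinv : ContinuousOn (fun x => (Matrix.of (V x))⁻¹) s :=
    ContinuousOn.matrix_inv hV fun x hx =>
      ((isUnit_iff_isUnit_det _).1 (linearIndependent_rows_iff_isUnit.1 (hind x hx))).ne_zero
  exact (continuous_fst.matrix_vecMul continuous_snd).comp_continuousOn (hw.prodMk hinv)

end FrameCoords

section Orthogonal

variable {𝕜 E ι : Type*} [NontriviallyNormedField 𝕜] [SeminormedAddCommGroup E]
  [NormedSpace 𝕜 E] [Fintype ι] (B : E →L[𝕜] E →L[𝕜] 𝕜) {v : ι → E}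

theorem apply_sum_smul_left (horth : Pairwise fun i j => B (v i) (v j) = 0) (a : ι → 𝕜)
    (k : ι) : B (∑ i, a i • v i) (v k) = a k * B (v k) (v k) := by
  rw [map_sum, sum_apply, Finset.sum_eq_single k]
  · simp
  · intro j _ hj
    simp [horth hj]
  · simp

theorem apply_sum_smul_right (horth : Pairwise fun i j => B (v i) (v j) = 0) (a : ι → 𝕜)
    (k : ι) : B (v k) (∑ i, a i • v i) = a k * B (v k) (v k) :=
  apply_sum_smul_left B.flip (fun _ _ hij => horth hij.symm) a k

end Orthogonal

theorem hasDerivWithinAt_apply_self_self {E F : Type*} [NormedAddCommGroup E] [NormedSpace ℝ E]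
    [NormedAddCommGroup F] [NormedSpace ℝ F] {B : E → E →L[ℝ] E →L[ℝ] F}
    {B' : E →L[ℝ] E →L[ℝ] E →L[ℝ] F} {e : E → E} {e' : E →L[ℝ] E} {c : ℝ → E} {c' : E}
    {s : Set ℝ} {t : ℝ} (hB : HasFDerivAt B B' (c t)) (he : HasFDerivAt e e' (c t))
    (hc : HasDerivWithinAt c c' s t) :
    HasDerivWithinAt (fun τ => B (c τ) (e (c τ)) (e (c τ)))
      (B' c' (e (c t)) (e (c t)) + B (c t) (e' c') (e (c t)) + B (c t) (e (c t)) (e' c')) s t := by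
  convert ((hB.clm_apply he).clm_apply he).comp_hasDerivWithinAt t hc using 1
  · rfl
  · simp only [add_apply, ContinuousLinearMap.comp_apply, ContinuousLinearMap.flip_apply]
    abel

theorem eq_zero_of_hasDerivWithinAt_smul_self {E : Type*} [NormedAddCommGroup E]
    [NormedSpace ℝ E] {f : ℝ → E} {g : ℝ → ℝ} {a b : ℝ} (hg : ContinuousOn g (Ico a b))
    (hf : ∀ t ∈ Ico a b, HasDerivWithinAt f (g t • f t) (Ico a b) t) (ha : f a = 0) :
    ∀ t ∈ Ico a b, f t = 0 := by
  intro t ht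
  have hsub : Icc a t ⊆ Ico a b := Icc_subset_Ico_right ht.2
  obtain ⟨C, hC⟩ := isCompact_Icc.exists_bound_of_continuousOn (hg.mono hsub)
  refine eq_zero_of_abs_deriv_le_mul_abs_self_of_eq_zero_right (f' := fun x => g x • f x) (K := C)
    (fun x hx => (hf x (hsub hx)).continuousWithinAt.mono hsub) (fun x hx => ?_) ha
    (fun x hx => ?_) t (right_mem_Icc.2 ht.1)
  · exact (hf x (hsub (Ico_subset_Icc_self hx))).mono_of_mem_nhdsWithin
      (Ico_mem_nhdsGE_of_mem ⟨hx.1, hx.2.trans_le ht.2.le⟩)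
  · rw [norm_smul]
    exact mul_le_mul_of_nonneg_right (hC x (Ico_subset_Icc_self hx)) (norm_nonneg _)

theorem exists_hasDerivWithinAt_diag_eq_mul_of_dual {n : ℕ} {U : Set (Vn n)} (hU : IsOpen U)
    {h : Vn n → Biln n} (hh : DifferentiableOn ℝ h U) {e : Fin n → Vn n → Vn n}
    (he : ∀ i, ContDiffOn ℝ 1 (e i) U) (hbasis : ∀ x ∈ U, LinearIndependent ℝ fun i => e i x)
    (horth : ∀ x ∈ U, Pairwise fun i j => h x (e i x) (e j x) = 0) {Γ Γs : Vn n → Chrn n}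
    (hΓ : ContinuousOn Γ U) (hΓs : ContinuousOn Γs U)
    (hdual : ∀ x ∈ U, ∀ v w u : Vn n, fderiv ℝ h x v w u = h x (Γ x v w) u + h x w (Γs x v u))
    {s : Set ℝ} (hs : UniqueDiffOn ℝ s) {c : ℝ → Vn n} (hc : ContDiffOn ℝ 1 c s)
    (hcU : MapsTo c s U) (k : Fin n) :
    ∃ g : ℝ → ℝ, ContinuousOn g s ∧ ∀ t ∈ s, HasDerivWithinAt
      (fun τ => h (c τ) (e k (c τ)) (e k (c τ))) (g t * h (c t) (e k (c t)) (e k (c t))) s t := by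
  set a : Vn n → Vn n → ℝ := fun x w => frameCoords (fun j => e j x) w k
  have hleft : ∀ x ∈ U, ∀ w, h x w (e k x) = a x w * h x (e k x) (e k x) := fun x hx w => by
    conv_lhs => rw [← sum_frameCoords_smul (hbasis x hx) w]
    exact apply_sum_smul_left _ (horth x hx) _ k
  have hright : ∀ x ∈ U, ∀ w, h x (e k x) w = a x w * h x (e k x) (e k x) := fun x hx w => by
    conv_lhs => rw [← sum_frameCoords_smul (hbasis x hx) w]
    exact apply_sum_smul_right _ (horth x hx) _ k
  set c' := derivWithin c s
  have hc' : ContinuousOn c' s := hc.continuousOn_derivWithin hs le_rfl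
  have hek : ContinuousOn (fun t => e k (c t)) s := (he k).continuousOn.comp hc.continuousOn hcU
  have ha : ∀ w : ℝ → Vn n, ContinuousOn w s → ContinuousOn (fun t => a (c t) (w t)) s :=
    fun w hw => (continuous_apply k).comp_continuousOn <|
      (continuousOn_pi.2 fun i => (he i).continuousOn.comp hc.continuousOn hcU).frameCoords
        (fun t ht => hbasis _ (hcU ht)) hw
  refine ⟨fun t => a (c t) (Γ (c t) (c' t) (e k (c t))) + a (c t) (Γs (c t) (c' t) (e k (c t)))
    + 2 * a (c t) (fderiv ℝ (e k) (c t) (c' t)), ?_, fun t ht => ?_⟩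
  · refine ((ha _ ?_).add (ha _ ?_)).add (continuousOn_const.mul (ha _ ?_))
    · exact ((hΓ.comp hc.continuousOn hcU).clm_apply hc').clm_apply hek
    · exact ((hΓs.comp hc.continuousOn hcU).clm_apply hc').clm_apply hek
    · exact (((he k).continuousOn_fderiv_of_isOpen hU le_rfl).comp hc.continuousOn hcU).clm_apply
        hc'
  · have hx := hcU ht
    have hnhds := hU.mem_nhds hx
    refine (hasDerivWithinAt_apply_self_self (hh.differentiableAt hnhds).hasFDerivAt
      (((he k).differentiableOn one_ne_zero).differentiableAt hnhds).hasFDerivAt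
      (hc.differentiableOn one_ne_zero t ht).hasDerivWithinAt).congr_deriv ?_
    rw [hdual _ hx, hleft _ hx (Γ _ _ _), hright _ hx (Γs _ _ _), hleft _ hx (fderiv ℝ _ _ _),
      hright _ hx (fderiv ℝ _ _ _)]
    ring

theorem statement5_general {n : ℕ} (U : Set (Vn n)) (hUopen : IsOpen U)
    (h : Vn n → Biln n) (hsmooth : ContDiffOn ℝ (⊤ : ℕ∞) h U)
    (e : Fin n → Vn n → Vn n)
    (hesmooth : ∀ i, ContDiffOn ℝ (⊤ : ℕ∞) (e i) U)
    (hbasis : ∀ x ∈ U, LinearIndependent ℝ (fun i : Fin n => e i x))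
    (lam : Fin n → Vn n → ℝ)
    (horth : ∀ x ∈ U, ∀ i j : Fin n, i ≠ j → h x (e i x) (e j x) = 0)
    (hdiag : ∀ x ∈ U, ∀ i : Fin n, h x (e i x) (e i x) = lam i x)
    (p : Vn n) (k : Fin n) (ε : ℝ) (hε : 0 < ε)
    (c : ℝ → Vn n) (hc : ContDiffOn ℝ 1 c (Ico 0 ε))
    (hcU : ∀ t ∈ Ico (0:ℝ) ε, c t ∈ U)
    (hc0 : c 0 = p)
    (hdeg : lam k p = 0)
    (hne : ∀ t ∈ Ioo (0:ℝ) ε, lam k (c t) ≠ 0) :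
    ¬ ∃ Γ Γs : Vn n → Chrn n,
        ContDiffOn ℝ (⊤ : ℕ∞) Γ U ∧ ContDiffOn ℝ (⊤ : ℕ∞) Γs U ∧
        ∀ x ∈ U, ∀ v w u : Vn n,
          fderiv ℝ h x v w u = h x (Γ x v w) u + h x w (Γs x v u) := by
  rintro ⟨Γ, Γs, hΓ, hΓs, hdual⟩
  obtain ⟨g, hg, hderiv⟩ := exists_hasDerivWithinAt_diag_eq_mul_of_dual hUopen
    (hsmooth.differentiableOn (by simp)) (fun i => (hesmooth i).of_le (by simp)) hbasis horth
    hΓ.continuousOn hΓs.continuousOn hdual (uniqueDiffOn_Ico 0 ε) hc hcU k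
  have hdiag_c : ∀ t ∈ Ico 0 ε, h (c t) (e k (c t)) (e k (c t)) = lam k (c t) :=
    fun t ht => hdiag _ (hcU t ht) k
  have hvanish : ∀ t ∈ Ico 0 ε, lam k (c t) = 0 := by
    refine eq_zero_of_hasDerivWithinAt_smul_self hg (fun t ht => ?_) (by rwa [hc0])
    simpa only [hdiag_c t ht, smul_eq_mul] using
      (hderiv t ht).congr_of_mem (fun τ hτ => (hdiag_c τ hτ).symm) ht
  exact hne (ε / 2) ⟨half_pos hε, half_lt_self hε⟩
    (hvanish _ ⟨(half_pos hε).le, half_lt_self hε⟩)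

/-- Paper's Proposition 2.5 (in coordinates): if the metric field `h` is diagonalized
by a smooth orthogonal frame with eigenfunctions `λᵢ`, and `h` degenerates at a point
`p = c 0` of a C¹ curve `c` along which `λ_k` is nonzero for `t ∈ (0, ε)`, then there
is no pair of smooth Christoffel maps on `U` that are mutually dual with respect
to `h`. -/
theorem statement5 {n : ℕ} (hn : 1 ≤ n) (U : Set (Vn n)) (hUopen : IsOpen U)
    (h : Vn n → Biln n) (hsmooth : ContDiffOn ℝ (⊤ : ℕ∞) h U)
    (hsymm : ∀ x ∈ U, ∀ v w : Vn n, h x v w = h x w v)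
    (e : Fin n → Vn n → Vn n)
    (hesmooth : ∀ i, ContDiffOn ℝ (⊤ : ℕ∞) (e i) U)
    (hbasis : ∀ x ∈ U, LinearIndependent ℝ (fun i : Fin n => e i x))
    (lam : Fin n → Vn n → ℝ)
    (hlamsmooth : ∀ i, ContDiffOn ℝ (⊤ : ℕ∞) (lam i) U)
    (horth : ∀ x ∈ U, ∀ i j : Fin n, i ≠ j → h x (e i x) (e j x) = 0)
    (hdiag : ∀ x ∈ U, ∀ i : Fin n, h x (e i x) (e i x) = lam i x)
    (p : Vn n) (hp : p ∈ U) (k : Fin n) (ε : ℝ) (hε : 0 < ε)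
    (c : ℝ → Vn n) (hc : ContDiffOn ℝ 1 c (Ico 0 ε))
    (hcU : ∀ t ∈ Ico (0:ℝ) ε, c t ∈ U)
    (hc0 : c 0 = p)
    (hdeg : lam k p = 0)
    (hne : ∀ t ∈ Ioo (0:ℝ) ε, lam k (c t) ≠ 0) :
    ¬ ∃ Γ Γs : Vn n → Chrn n,
        ContDiffOn ℝ (⊤ : ℕ∞) Γ U ∧ ContDiffOn ℝ (⊤ : ℕ∞) Γs U ∧
        ∀ x ∈ U, ∀ v w u : Vn n,
          fderiv ℝ h x v w u = h x (Γ x v w) u + h x w (Γs x v u) :=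
  statement5_general U hUopen h hsmooth e hesmooth hbasis lam horth hdiag p k ε hε c hc hcU hc0 hdeg
    hne
end
end
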